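/- Fix scores on a finite population I⁻ with s₊ ∈ ℝ, and let K be a uniformly random k-element subset of I⁻. Then P(-log NDCG(r₊) ≤ ℓ_BPR(K)) ≥ P(|Γ^K| ≥ log₂(log₂(1 + r₊))), where r₊ = 1 + |{i ∈ I⁻ : s_i ≥ s₊}|. -/

import Mathlib

/-!
Each negative scoring at least `s₊` contributes at least `log (1 + e⁰) = log 2` to the BPR loss
and every other term is nonnegative, so `ℓ_BPR(K) ≥ |Γ^K| log 2`. Since
`-log NDCG(r₊) = log (log₂ (1 + r₊))`, the event `|Γ^K| ≥ log₂ (log₂ (1 + r₊))` is contained in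
the event `ℓ_BPR(K) ≥ -log NDCG(r₊)`, and probabilities are monotone under inclusion of events.
-/

open Finset Real

lemma Real.log_two_le_log_one_add_exp {x : ℝ} (hx : 0 ≤ x) : log 2 ≤ log (1 + exp x) := by
  have := one_le_exp hx
  exact log_le_log two_pos (by linarith)

lemma Real.log_one_add_exp_nonneg (x : ℝ) : 0 ≤ log (1 + exp x) :=
  log_nonneg (by linarith [exp_pos x])

lemma card_filter_le_mul_log_two_le_sum_log_one_add_exp {ι : Type*} (K : Finset ι) (s : ι → ℝ)
    (c : ℝ) :
    ((K.filter (fun i => c ≤ s i)).card : ℝ) * log 2 ≤ ∑ i ∈ K, log (1 + exp (s i - c)) := by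
  have hΓ : ((K.filter (fun i => c ≤ s i)).card : ℝ) * log 2 ≤
      ∑ i ∈ K.filter (fun i => c ≤ s i), log (1 + exp (s i - c)) := by
    rw [← nsmul_eq_mul]
    refine card_nsmul_le_sum _ _ _ fun i hi => log_two_le_log_one_add_exp ?_
    linarith [(mem_filter.mp hi).2]
  exact hΓ.trans <| sum_le_sum_of_subset_of_nonneg (filter_subset _ _)
    fun i _ _ => log_one_add_exp_nonneg _

lemma neg_log_one_div_le_of_logb_two_le {x n ℓ : ℝ} (h : logb 2 x ≤ n) (hℓ : n * log 2 ≤ ℓ) :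
    -log (1 / x) ≤ ℓ := by
  rw [one_div, log_inv, neg_neg]
  rw [logb, div_le_iff₀ (log_pos one_lt_two)] at h
  exact h.trans hℓ

lemma card_filter_div_le_card_filter_div {α : Type*} (S : Finset α) (p q : α → Prop)
    [DecidablePred p] [DecidablePred q] (hpq : ∀ a ∈ S, p a → q a) (n : ℝ) (hn : 0 ≤ n) :
    ((S.filter p).card : ℝ) / n ≤ ((S.filter q).card : ℝ) / n :=
  div_le_div_of_nonneg_right (by exact_mod_cast card_le_card (monotone_filter_right S hpq)) hn

theorem stmt_11_general {ι : Type*} (Iminus : Finset ι) (s : ι → ℝ) (spos : ℝ)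
    (k : ℕ) (rpos : ℕ) :
    ((((Iminus.powersetCard k).filter
        (fun K => Real.logb 2 (Real.logb 2 (1 + (rpos : ℝ))) ≤
          ((K.filter (fun i => spos ≤ s i)).card : ℝ))).card : ℝ) /
      (Iminus.card.choose k : ℝ)) ≤
    ((((Iminus.powersetCard k).filter
        (fun K => -Real.log (1 / Real.logb 2 (1 + (rpos : ℝ))) ≤
          ∑ i ∈ K, Real.log (1 + Real.exp (s i - spos)))).card : ℝ) /
      (Iminus.card.choose k : ℝ)) :=
  card_filter_div_le_card_filter_div _ _ _
    (fun K _ hK => neg_log_one_div_le_of_logb_two_le hK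
      (card_filter_le_mul_log_two_le_sum_log_one_add_exp K s spos))
    _ (Nat.cast_nonneg _)

/-- Probability (over a uniformly random `k`-subset `K` of `Iminus`) that
`-log NDCG(r₊) ≤ ℓ_BPR(K)` is at least the probability that
`|Γ^K| ≥ log₂(log₂(1 + r₊))`. -/
theorem stmt_11 {ι : Type*} [DecidableEq ι] (Iminus : Finset ι) (s : ι → ℝ) (spos : ℝ)
    (k : ℕ) (rpos : ℕ) (hr : rpos = 1 + (Iminus.filter (fun i => spos ≤ s i)).card) :
    ((((Iminus.powersetCard k).filter
        (fun K => Real.logb 2 (Real.logb 2 (1 + (rpos : ℝ))) ≤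
          ((K.filter (fun i => spos ≤ s i)).card : ℝ))).card : ℝ) /
      (Iminus.card.choose k : ℝ)) ≤
    ((((Iminus.powersetCard k).filter
        (fun K => -Real.log (1 / Real.logb 2 (1 + (rpos : ℝ))) ≤
          ∑ i ∈ K, Real.log (1 + Real.exp (s i - spos)))).card : ℝ) /
      (Iminus.card.choose k : ℝ)) :=
  stmt_11_general Iminus s spos k rpos
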